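/- arXiv:2006.06393 — 2 statements merged into one kernel-verified Lean document; each statement's English description precedes it below -/
import Mathlib

section
/- Let g and k be two different jobs such that x_{g1} > 0 and x_{k2} > 0. If ε_r(g,k) > 0, then no (g,k)-feasible semi-matching E in G exists. -/
open Finset

noncomputable section

/-- Feasibility for system `S`. -/
def FeasibleS {J M : Type*} [Fintype J] [Fintype M]
    (G1 G2 : Finset M) (b : J → M → ℕ) (a1 a2 : J → ℕ)
    (y : J → M → ℝ) (x1 x2 : J → ℝ) (r w : ℝ) : Prop :=
  (∀ h ∈ G1, ((∑ j, (b j h : ℝ)) - ((∑ j, (a2 j : ℝ)) - r) ≤ (∑ j, y j h)) ∧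
    ((∑ j, y j h) ≤ w)) ∧
  (∀ h ∈ G2, ((∑ j, (b j h : ℝ)) - ((∑ j, (a1 j : ℝ)) - r) ≤ (∑ j, y j h)) ∧
    ((∑ j, y j h) ≤ w)) ∧
  (∀ j, (∑ h, y j h) ≤ w) ∧
  (∀ j, ∀ h, 0 ≤ y j h ∧ y j h ≤ (b j h : ℝ)) ∧
  ((∑ j, x1 j) = r) ∧ ((∑ j, x2 j) = r) ∧
  (∀ j, x1 j + x2 j ≤ r) ∧
  (∀ j, 0 ≤ x1 j ∧ x1 j ≤ (a1 j : ℝ)) ∧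
  (∀ j, 0 ≤ x2 j ∧ x2 j ≤ (a2 j : ℝ)) ∧
  (∀ j, (∑ h ∈ G1, ((b j h : ℝ) - y j h)) + (a2 j : ℝ) - x2 j ≤ (∑ j', (a2 j' : ℝ)) - r) ∧
  (∀ j, (∑ h ∈ G2, ((b j h : ℝ) - y j h)) + (a1 j : ℝ) - x1 j ≤ (∑ j', (a1 j' : ℝ)) - r)

/-- Feasibility for the linear program `ℓp` associated with an optimal
LP-relaxation value `(rstar, wstar)`. -/
def FeasibleLP {J M : Type*} [Fintype J] [Fintype M]
    (G1 G2 : Finset M) (b : J → M → ℕ) (a1 a2 : J → ℕ)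
    (rstar wstar : ℝ)
    (y : J → M → ℝ) (x1 x2 : J → ℝ) (r w : ℝ) : Prop :=
  FeasibleS G1 G2 b a1 a2 y x1 x2 r w ∧
  w - r = (⌈wstar - rstar⌉ : ℝ) ∧ ((⌊rstar⌋ : ℝ) ≤ r)

/-- The quantity `ε_r(g,k)`. -/
def epsR {J : Type*} [DecidableEq J] (B1 B2 : Finset J) (x1 x2 : J → ℝ)
    (r ε : ℝ) (g k : J) : ℝ :=
  if hne : ((B1 ∪ B2) \ {g, k}).Nonempty then
    min (((B1 ∪ B2) \ {g, k}).inf' hne (fun j => r - (x1 j + x2 j))) ε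
  else ε

/-- The slack `ε_a(g)`. -/
def epsA {J M : Type*} [Fintype J] (G2 : Finset M) (b : J → M → ℕ) (a1 : J → ℕ)
    (y : J → M → ℝ) (x1 : J → ℝ) (r : ℝ) (g : J) : ℝ :=
  (∑ h ∈ G2, y g h) -
    ((∑ h ∈ G2, (b g h : ℝ)) + (a1 g : ℝ) - x1 g - (∑ j, (a1 j : ℝ)) + r)

/-- The slack `ε_c(k)`. -/
def epsC {J M : Type*} [Fintype J] (G1 : Finset M) (b : J → M → ℕ) (a2 : J → ℕ)
    (y : J → M → ℝ) (x2 : J → ℝ) (r : ℝ) (k : J) : ℝ :=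
  (∑ h ∈ G1, y k h) -
    ((∑ h ∈ G1, (b k h : ℝ)) + (a2 k : ℝ) - x2 k - (∑ j, (a2 j : ℝ)) + r)

/-!
If such an `E` existed, lowering `r`, `w`, `x_{g1}`, `x_{k2}` and every `y_{jh}` with
`(j, h) ∈ E` by a small `δ > 0` would keep the optimum of `ℓp` feasible, contradicting the
minimality of `r`. As `|E| = m` and both halves of `E` are matchings, `E` meets every machine
exactly once, so every machine load drops by exactly `δ`, and d-tight jobs lose at least `δ`.
In a group constraint of a job the loss on `y` is at most `δ`, offset by the drop of `r`; only
for `k` (resp. `g`) does `x` drop as well, and there either `E` avoids the group or the slack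
`ε_c(k)` (resp. `ε_a(g)`) absorbs it. Finally `x_{j1} + x_{j2} ≤ r - δ` for fractional
`j ∉ {g, k}` because `δ ≤ ε_r(g,k)`, and for integral `j` because an integer below
`⌊r*⌋ + ε < ⌊r*⌋ + 1` is at most `⌊r*⌋ = r - ε`.
-/

open Filter Topology

section SemiMatching

variable {J M : Type*}

def IsMatchingOn (E : Finset (J × M)) (s : Finset M) : Prop :=
  ∀ e ∈ E, ∀ e' ∈ E, e.2 ∈ s → e'.2 ∈ s → e ≠ e' → e.1 ≠ e'.1 ∧ e.2 ≠ e'.2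

variable [DecidableEq J] [DecidableEq M] {E : Finset (J × M)} {s : Finset M}

theorem IsMatchingOn.card_machines_le_one (hE : IsMatchingOn E s) (j : J) :
    #{h ∈ s | (j, h) ∈ E} ≤ 1 := by
  refine card_le_one.2 fun h hh h' hh' => ?_
  rw [mem_filter] at hh hh'
  by_contra hne
  exact (hE _ hh.2 _ hh'.2 hh.1 hh'.1 (by simpa using hne)).1 rfl

variable [Fintype J]

theorem IsMatchingOn.card_jobs_le_one (hE : IsMatchingOn E s) {h : M} (hh : h ∈ s) :
    #{j | (j, h) ∈ E} ≤ 1 := by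
  refine card_le_one.2 fun j hj j' hj' => ?_
  rw [mem_filter] at hj hj'
  by_contra hne
  exact (hE _ hj.2 _ hj'.2 hh hh (by simpa using hne)).2 rfl

variable [Fintype M]

theorem card_eq_sum_card_jobs (E : Finset (J × M)) : #E = ∑ h, #{j | (j, h) ∈ E} := by
  rw [card_eq_sum_card_fiberwise (f := Prod.snd) (t := univ) fun _ _ => mem_univ _]
  refine sum_congr rfl fun h _ => card_nbij' Prod.fst (fun j => (j, h)) ?_ ?_ ?_ ?_ <;>
    intro _ <;> aesop

theorem card_jobs_eq_one {G1 G2 : Finset M} (hcover : G1 ∪ G2 = univ)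
    (h1 : IsMatchingOn E G1) (h2 : IsMatchingOn E G2) (hcard : #E = Fintype.card M) (h : M) :
    #{j | (j, h) ∈ E} = 1 := by
  have hle : ∀ h, #{j | (j, h) ∈ E} ≤ 1 := fun h => by
    rcases mem_union.1 (hcover ▸ mem_univ h) with hh | hh
    exacts [h1.card_jobs_le_one hh, h2.card_jobs_le_one hh]
  refine (sum_eq_sum_iff_of_le fun h _ => hle h).1 ?_ h (mem_univ h)
  simp [← card_eq_sum_card_jobs, hcard]

end SemiMatching

section EpsR

variable {J : Type*} [DecidableEq J] {B1 B2 : Finset J} {x1 x2 : J → ℝ} {r ε : ℝ} {g k : J}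

theorem epsR_le_right : epsR B1 B2 x1 x2 r ε g k ≤ ε := by
  unfold epsR
  split_ifs
  exacts [min_le_right _ _, le_rfl]

theorem epsR_le_sub {j : J} (hj : j ∈ (B1 ∪ B2) \ {g, k}) :
    epsR B1 B2 x1 x2 r ε g k ≤ r - (x1 j + x2 j) := by
  rw [epsR, dif_pos ⟨j, hj⟩]
  exact (min_le_left _ _).trans (inf'_le _ hj)

theorem add_le_sub_of_le_epsR {n : ℤ} (hB1 : ∀ j, j ∈ B1 ↔ ¬∃ z : ℤ, x1 j = (z : ℝ))
    (hB2 : ∀ j, j ∈ B2 ↔ ¬∃ z : ℤ, x2 j = (z : ℝ)) (hε1 : ε < 1) (hr : r = n + ε)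
    {δ : ℝ} (hδ : δ ≤ epsR B1 B2 x1 x2 r ε g k) {j : J} (hjg : j ≠ g) (hjk : j ≠ k)
    (hj : x1 j + x2 j ≤ r) : x1 j + x2 j ≤ r - δ := by
  by_cases hjB : j ∈ B1 ∪ B2
  · linarith [hδ.trans (epsR_le_sub (mem_sdiff.2 ⟨hjB, by simp [hjg, hjk]⟩))]
  obtain ⟨z1, hz1⟩ := (hB1 j).not_left.1 fun h => hjB (mem_union_left _ h)
  obtain ⟨z2, hz2⟩ := (hB2 j).not_left.1 fun h => hjB (mem_union_right _ h)
  have hlt : ((z1 + z2 : ℤ) : ℝ) < (n + 1 : ℤ) := by push_cast; linarith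
  have hle : z1 + z2 ≤ n := Int.lt_add_one_iff.1 (by exact_mod_cast hlt)
  have hle' : (z1 : ℝ) + z2 ≤ n := by exact_mod_cast hle
  linarith [hδ.trans epsR_le_right]

end EpsR

section Slack

variable {J M : Type*} [Fintype J] {G1 G2 : Finset M} {b : J → M → ℕ} {a1 a2 : J → ℕ}
  {y : J → M → ℝ} {x1 x2 : J → ℝ} {r w : ℝ}

theorem epsC_eq_slack (k : J) : epsC G1 b a2 y x2 r k =
    (∑ j, (a2 j : ℝ)) - r - ((∑ h ∈ G1, ((b k h : ℝ) - y k h)) + a2 k - x2 k) := by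
  rw [epsC, sum_sub_distrib]
  ring

theorem epsA_eq_slack (g : J) : epsA G2 b a1 y x1 r g =
    (∑ j, (a1 j : ℝ)) - r - ((∑ h ∈ G2, ((b g h : ℝ) - y g h)) + a1 g - x1 g) := by
  rw [epsA, sum_sub_distrib]
  ring

theorem FeasibleS.epsC_nonneg [Fintype M] (hS : FeasibleS G1 G2 b a1 a2 y x1 x2 r w)
    (k : J) :
    0 ≤ epsC G1 b a2 y x2 r k := by
  obtain ⟨-, -, -, -, -, -, -, -, -, hjob, -⟩ := hS
  rw [epsC_eq_slack]
  linarith [hjob k]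

theorem FeasibleS.epsA_nonneg [Fintype M] (hS : FeasibleS G1 G2 b a1 a2 y x1 x2 r w)
    (g : J) :
    0 ≤ epsA G2 b a1 y x1 r g := by
  obtain ⟨-, -, -, -, -, -, -, -, -, -, hjob⟩ := hS
  rw [epsA_eq_slack]
  linarith [hjob g]

end Slack

section Perturbation

variable {J M : Type*} [DecidableEq J]

theorem sub_single_bounds {x u : J → ℝ} {c : J} {δ : ℝ} (hx : ∀ j, 0 ≤ x j ∧ x j ≤ u j)
    (hδ : 0 ≤ δ) (hc : δ ≤ x c) (j : J) :
    0 ≤ (x - Pi.single c δ : J → ℝ) j ∧ (x - Pi.single c δ : J → ℝ) j ≤ u j := by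
  obtain ⟨h0, h1⟩ := hx j
  rcases eq_or_ne j c with rfl | hjc
  · simp only [Pi.sub_apply, Pi.single_eq_same]
    constructor <;> linarith
  · simp [hjc, h0, h1]

variable [DecidableEq M] {E : Finset (J × M)} {b : J → M → ℕ} {y : J → M → ℝ} {δ r : ℝ}

theorem job_constraint_perturb {s : Finset M} {a : J → ℕ} {x : J → ℝ} {Δ : ℝ} {c j : J}
    (hδ : 0 ≤ δ) (hj : ∑ h ∈ s, ((b j h : ℝ) - y j h) + a j - x j ≤ Δ - r)
    (hdeg : #{h ∈ s | (j, h) ∈ E} ≤ 1)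
    (hc : j = c → (∀ h ∈ s, (j, h) ∉ E) ∨
      δ ≤ Δ - r - (∑ h ∈ s, ((b j h : ℝ) - y j h) + a j - x j)) :
    ∑ h ∈ s, ((b j h : ℝ) - (y j h - if (j, h) ∈ E then δ else 0)) + a j -
      (x - Pi.single c δ : J → ℝ) j ≤ Δ - (r - δ) := by
  have hsplit : ∑ h ∈ s, ((b j h : ℝ) - (y j h - if (j, h) ∈ E then δ else 0)) =
      ∑ h ∈ s, ((b j h : ℝ) - y j h) + #{h ∈ s | (j, h) ∈ E} * δ := by
    rw [← nsmul_eq_mul, ← sum_const, sum_filter, ← sum_add_distrib]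
    exact sum_congr rfl fun _ _ => by ring
  have hshift : (#{h ∈ s | (j, h) ∈ E} : ℝ) * δ ≤ δ :=
    mul_le_of_le_one_left hδ (by exact_mod_cast hdeg)
  rw [hsplit, Pi.sub_apply]
  rcases eq_or_ne j c with rfl | hjc
  · rw [Pi.single_eq_same]
    rcases hc rfl with hnone | hslack
    · rw [filter_false_of_mem hnone, card_empty, Nat.cast_zero, zero_mul]
      linarith
    · linarith
  · rw [Pi.single_eq_of_ne hjc]
    linarith

theorem FeasibleS.perturb [Fintype J] [Fintype M] {G1 G2 : Finset M} {a1 a2 : J → ℕ}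
    {x1 x2 : J → ℝ} {w : ℝ} (hS : FeasibleS G1 G2 b a1 a2 y x1 x2 r w) {g k : J}
    (hδ : 0 ≤ δ) (hjobs : ∀ h, #{j | (j, h) ∈ E} = 1)
    (hG1 : ∀ j, #{h ∈ G1 | (j, h) ∈ E} ≤ 1) (hG2 : ∀ j, #{h ∈ G2 | (j, h) ∈ E} ≤ 1)
    (hyE : ∀ e ∈ E, δ ≤ y e.1 e.2) (hrow : ∀ j, (∃ h, (j, h) ∈ E) ∨ δ ≤ w - ∑ h, y j h)
    (hxg : δ ≤ x1 g) (hxk : δ ≤ x2 k) (hx12 : ∀ j, j ≠ g → j ≠ k → x1 j + x2 j ≤ r - δ)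
    (hk : (∀ h ∈ G1, (k, h) ∉ E) ∨ δ ≤ epsC G1 b a2 y x2 r k)
    (hg : (∀ h ∈ G2, (g, h) ∉ E) ∨ δ ≤ epsA G2 b a1 y x1 r g) :
    FeasibleS G1 G2 b a1 a2 (fun j h => y j h - if (j, h) ∈ E then δ else 0)
      (x1 - Pi.single g δ) (x2 - Pi.single k δ) (r - δ) (w - δ) := by
  obtain ⟨hcol1, hcol2, hrow', hy, hx1, hx2, hx12', hx1b, hx2b, hj1, hj2⟩ := hS
  have hcolE (h : M) : ∑ j, (if (j, h) ∈ E then δ else 0) = δ := by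
    rw [← sum_filter, sum_const, hjobs h, one_smul]
  have hE0 (j : J) (h : M) : 0 ≤ if (j, h) ∈ E then δ else 0 := ite_nonneg hδ le_rfl
  have hsingle0 (c j : J) : 0 ≤ (Pi.single c δ : J → ℝ) j := by
    rcases eq_or_ne j c with rfl | hjc <;> simp [*]
  refine ⟨fun h hh => ?_, fun h hh => ?_, fun j => ?_, fun j h => ?_, ?_, ?_, fun j => ?_,
    sub_single_bounds hx1b hδ hxg, sub_single_bounds hx2b hδ hxk, fun j => ?_, fun j => ?_⟩
  · rw [sum_sub_distrib, hcolE]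
    constructor <;> linarith [hcol1 h hh]
  · rw [sum_sub_distrib, hcolE]
    constructor <;> linarith [hcol2 h hh]
  · rw [sum_sub_distrib]
    rcases hrow j with ⟨h, hh⟩ | hslack
    · have := single_le_sum (fun h _ => hE0 j h) (mem_univ h)
      rw [if_pos hh] at this
      linarith [hrow' j]
    · linarith [hrow' j, sum_nonneg fun h (_ : h ∈ univ) => hE0 j h]
  · dsimp only
    split_ifs with he
    · constructor <;> linarith [hy j h, hyE _ he]
    · simpa using hy j h
  · simp [sum_sub_distrib, hx1]
  · simp [sum_sub_distrib, hx2]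
  · simp only [Pi.sub_apply]
    rcases eq_or_ne j g with rfl | hjg
    · rw [Pi.single_eq_same]
      linarith [hx12' j, hsingle0 k j]
    rcases eq_or_ne j k with rfl | hjk
    · rw [Pi.single_eq_same]
      linarith [hx12' j, hsingle0 g j]
    rw [Pi.single_eq_of_ne hjg, Pi.single_eq_of_ne hjk]
    linarith [hx12 j hjg hjk]
  · exact job_constraint_perturb hδ (hj1 j) (hG1 j) fun hjk =>
      hjk ▸ by rwa [← epsC_eq_slack]
  · exact job_constraint_perturb hδ (hj2 j) (hG2 j) fun hjg =>
      hjg ▸ by rwa [← epsA_eq_slack]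

end Perturbation

theorem no_feasible_semi_matching_general
    {J M : Type*} [Fintype J] [Fintype M] [DecidableEq J] [DecidableEq M]
    (G1 G2 : Finset M)
    (hcover : G1 ∪ G2 = Finset.univ)
    (b : J → M → ℕ) (a1 a2 : J → ℕ)
    (rstar wstar : ℝ)
    (y : J → M → ℝ) (x1 x2 : J → ℝ) (r w : ℝ)
    (hfeas : FeasibleLP G1 G2 b a1 a2 rstar wstar y x1 x2 r w)
    (hopt : ∀ y' x1' x2' r' w',
      FeasibleLP G1 G2 b a1 a2 rstar wstar y' x1' x2' r' w' → r ≤ r')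
    (ε : ℝ) (hε1 : ε < 1) (hrε : r = (⌊rstar⌋ : ℝ) + ε)
    (B1 B2 : Finset J)
    (hB1 : ∀ j, j ∈ B1 ↔ ¬∃ z : ℤ, x1 j = (z : ℝ))
    (hB2 : ∀ j, j ∈ B2 ↔ ¬∃ z : ℤ, x2 j = (z : ℝ))
    (g k : J) (hxg : 0 < x1 g) (hxk : 0 < x2 k)
    (hepsr : 0 < epsR B1 B2 x1 x2 r ε g k) :
    ¬ ∃ E : Finset (J × M),
      E.card = Fintype.card M ∧
      (∀ e ∈ E, 0 < y e.1 e.2) ∧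
      (∀ e ∈ E, ∀ e' ∈ E, e.2 ∈ G1 → e'.2 ∈ G1 → e ≠ e' → e.1 ≠ e'.1 ∧ e.2 ≠ e'.2) ∧
      (∀ e ∈ E, ∀ e' ∈ E, e.2 ∈ G2 → e'.2 ∈ G2 → e ≠ e' → e.1 ≠ e'.1 ∧ e.2 ≠ e'.2) ∧
      (∀ j, ((∑ h, y j h) = w) → ∃ h, (j, h) ∈ E) ∧
      (epsA G2 b a1 y x1 r g = 0 → ∀ h ∈ G2, (g, h) ∉ E) ∧
      (epsC G1 b a2 y x2 r k = 0 → ∀ h ∈ G1, (k, h) ∉ E) := by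
  rintro ⟨E, hcard, hpos, hm1, hm2, hD, hAg, hCk⟩
  obtain ⟨hS, hwr, hfloor⟩ := hfeas
  have hrow : ∀ j, ∑ h, y j h ≤ w := hS.2.2.1
  have hx12 : ∀ j, x1 j + x2 j ≤ r := hS.2.2.2.2.2.2.1
  have hsmall : ∀ᶠ δ in 𝓝 (0 : ℝ), δ ≤ epsR B1 B2 x1 x2 r ε g k ∧ δ ≤ x1 g ∧ δ ≤ x2 k ∧
      (∀ e ∈ E, δ ≤ y e.1 e.2) ∧ (∀ j, ∑ h, y j h < w → δ ≤ w - ∑ h, y j h) ∧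
      (epsC G1 b a2 y x2 r k ≠ 0 → δ ≤ epsC G1 b a2 y x2 r k) ∧
      (epsA G2 b a1 y x1 r g ≠ 0 → δ ≤ epsA G2 b a1 y x1 r g) :=
    (eventually_le_nhds hepsr).and <| (eventually_le_nhds hxg).and <|
      (eventually_le_nhds hxk).and <|
      ((eventually_all_finset E).2 fun e he => eventually_le_nhds (hpos e he)).and <|
      (eventually_all.2 fun j => eventually_imp_distrib_left.2 fun hj =>
        eventually_le_nhds (sub_pos.2 hj)).and <|
      (eventually_imp_distrib_left.2 fun h0 =>
        eventually_le_nhds ((hS.epsC_nonneg k).lt_of_ne' h0)).and <|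
      eventually_imp_distrib_left.2 fun h0 =>
        eventually_le_nhds ((hS.epsA_nonneg g).lt_of_ne' h0)
  obtain ⟨δ, ⟨hδR, hδg, hδk, hδE, hδrow, hδC, hδA⟩, hδ : 0 < δ⟩ :=
    ((hsmall.filter_mono nhdsWithin_le_nhds).and
      (eventually_mem_nhdsWithin (s := Set.Ioi 0))).exists
  have hS' := hS.perturb hδ.le (card_jobs_eq_one hcover hm1 hm2 hcard)
    (IsMatchingOn.card_machines_le_one hm1) (IsMatchingOn.card_machines_le_one hm2) hδE
    (fun j => (hrow j).eq_or_lt.imp (hD j) (hδrow j)) hδg hδk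
    (fun j hjg hjk => add_le_sub_of_le_epsR hB1 hB2 hε1 hrε hδR hjg hjk (hx12 j))
    ((em _).imp hCk hδC) ((em _).imp hAg hδA)
  linarith [hopt _ _ _ _ _ ⟨hS', by linarith, by linarith [hδR.trans epsR_le_right]⟩]

theorem no_feasible_semi_matching
    {J M : Type*} [Fintype J] [Fintype M] [DecidableEq J] [DecidableEq M]
    (G1 G2 : Finset M) (hG1ne : G1.Nonempty) (hG2ne : G2.Nonempty)
    (hdisj : Disjoint G1 G2) (hcover : G1 ∪ G2 = Finset.univ)
    (b : J → M → ℕ) (a1 a2 : J → ℕ)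
    (ystar : J → M → ℝ) (x1star x2star : J → ℝ) (rstar wstar : ℝ)
    (hstar : FeasibleS G1 G2 b a1 a2 ystar x1star x2star rstar wstar)
    (hstaropt : ∀ y' x1' x2' r' w', FeasibleS G1 G2 b a1 a2 y' x1' x2' r' w' →
      wstar - rstar ≤ w' - r')
    (y : J → M → ℝ) (x1 x2 : J → ℝ) (r w : ℝ)
    (hfeas : FeasibleLP G1 G2 b a1 a2 rstar wstar y x1 x2 r w)
    (hopt : ∀ y' x1' x2' r' w',
      FeasibleLP G1 G2 b a1 a2 rstar wstar y' x1' x2' r' w' → r ≤ r')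
    (ε : ℝ) (hε0 : 0 < ε) (hε1 : ε < 1) (hrε : r = (⌊rstar⌋ : ℝ) + ε)
    (B1 B2 : Finset J)
    (hB1 : ∀ j, j ∈ B1 ↔ ¬∃ z : ℤ, x1 j = (z : ℝ))
    (hB2 : ∀ j, j ∈ B2 ↔ ¬∃ z : ℤ, x2 j = (z : ℝ))
    (g k : J) (hgk : g ≠ k) (hxg : 0 < x1 g) (hxk : 0 < x2 k)
    (hepsr : 0 < epsR B1 B2 x1 x2 r ε g k) :
    ¬ ∃ E : Finset (J × M),
      E.card = Fintype.card M ∧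
      (∀ e ∈ E, 0 < y e.1 e.2) ∧
      (∀ e ∈ E, ∀ e' ∈ E, e.2 ∈ G1 → e'.2 ∈ G1 → e ≠ e' → e.1 ≠ e'.1 ∧ e.2 ≠ e'.2) ∧
      (∀ e ∈ E, ∀ e' ∈ E, e.2 ∈ G2 → e'.2 ∈ G2 → e ≠ e' → e.1 ≠ e'.1 ∧ e.2 ≠ e'.2) ∧
      (∀ j, ((∑ h, y j h) = w) → ∃ h, (j, h) ∈ E) ∧
      (epsA G2 b a1 y x1 r g = 0 → ∀ h ∈ G2, (g, h) ∉ E) ∧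
      (epsC G1 b a2 y x2 r k = 0 → ∀ h ∈ G1, (k, h) ∉ E) :=
  no_feasible_semi_matching_general G1 G2 hcover b a1 a2 rstar wstar y x1 x2 r w hfeas hopt ε hε1
    hrε B1 B2 hB1 hB2 g k hxg hxk hepsr
end
end

section
/- Let g, k, a, and b be four different jobs such that x_{g1} > 0, x_{k2} > 0, x_{a1} > 0, and x_{b2} > 0. If ε_r(g,k) > 0 and ε_r(a,b) > 0, then a column of type (∗, a, b, g, k ; ∗) does not exist in d(y,w) or a column of type (∗ ; ∗, a, b, k, g) does not exist in d(y,w); i.e., it is impossible that d(y,w) contains both a column matching all of a, b, g, k to machines of G1 and a column matching all of a, b, k, g to machines of G2. -/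
open Finset

noncomputable section

/-- A column matching: a matching of all machines to distinct jobs, using only
edges of the graph `G` (i.e. pairs with `y j h > 0`), and covering every
`d`-tight job (every job `j` with `∑ h, y j h = w`). -/
def IsColumn {J M : Type*} [Fintype M] (y : J → M → ℝ) (w : ℝ) (f : M → J) : Prop :=
  Function.Injective f ∧ (∀ h, 0 < y (f h) h) ∧
  (∀ j, ((∑ h, y j h) = w) → ∃ h, f h = j)

/-- `cols` together with multiplicities `mult` is a representation `d(y,w)` of the
part (d) of the solution as a set of columns. -/
def IsColRep {J M : Type*} [Fintype J] [Fintype M] [DecidableEq J]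
    (y : J → M → ℝ) (w : ℝ) (cols : Finset (M → J)) (mult : (M → J) → ℝ) : Prop :=
  (∀ f ∈ cols, IsColumn y w f ∧ 0 < mult f) ∧
  ((∑ f ∈ cols, mult f) = w) ∧
  (∀ j, ∀ h, y j h = ∑ f ∈ cols, if f h = j then mult f else 0)

/-!
If both columns existed, lower the multiplicity of each of them by `t`, and lower `x_{g1}`,
`x_{a1}`, `x_{k2}`, `x_{b2}` by `t` as well. Every machine then loses exactly `2t`, every
`d`-tight job is covered by both columns and so also loses `2t`, and in the per-job constraint of
`G1` a job gains at most `t` from each source that can touch it: the column sending `k` and `b`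
into `G2` never meets them on `G1`. The constraints `x_{j1} + x_{j2} ≤ r` keep a slack of
`min (ε_r(g,k), ε_r(a,b)) > 0`, since every job avoids one of the pairs `{g,k}`, `{a,b}` and a
job outside `B1 ∪ B2` has integral `x_{j1} + x_{j2} ≤ ⌊r⌋ = r - ε`. Hence for small `t > 0` the
point is feasible for `ℓp` with `r - 2t` in place of `r`, contradicting the optimality of `r`.
-/

open Filter Topology

section Columns

variable {J M : Type*} [DecidableEq J]

/-- `y - columnMatrix f t` is `y` with the multiplicity of the column `f` in `d(y,w)` lowered
by `t`. -/
def columnMatrix (f : M → J) (t : ℝ) : J → M → ℝ := fun j h => if f h = j then t else 0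

lemma columnMatrix_nonneg {f : M → J} {t : ℝ} (ht : 0 ≤ t) (j : J) (h : M) :
    0 ≤ columnMatrix f t j h := by
  unfold columnMatrix
  split_ifs <;> simp [ht]

lemma sum_columnMatrix_jobs [Fintype J] (f : M → J) (t : ℝ) (h : M) :
    ∑ j, columnMatrix f t j h = t := by
  simp [columnMatrix]

lemma sum_columnMatrix_of_injective {f : M → J} (hf : Function.Injective f) (t : ℝ)
    (S : Finset M) (j : J) :
    ∑ h ∈ S, columnMatrix f t j h = if j ∈ S.image f then t else 0 := by
  rw [← (S.image f).sum_ite_eq' j fun _ => t, sum_image hf.injOn]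
  rfl

lemma sum_columnMatrix_le {f : M → J} (hf : Function.Injective f) {t : ℝ} (ht : 0 ≤ t)
    (S : Finset M) (j : J) : ∑ h ∈ S, columnMatrix f t j h ≤ t := by
  rw [sum_columnMatrix_of_injective hf]
  split_ifs <;> simp [ht]

lemma sum_columnMatrix_eq_zero {f : M → J} (hf : Function.Injective f) (t : ℝ)
    {S T : Finset M} (hST : Disjoint S T) {j : J} (hj : ∃ h ∈ T, f h = j) :
    ∑ h ∈ S, columnMatrix f t j h = 0 := by
  obtain ⟨h', hh', rfl⟩ := hj
  rw [sum_columnMatrix_of_injective hf, if_neg]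
  simp only [mem_image, not_exists, not_and]
  intro h hh he
  exact disjoint_left.1 hST hh (hf he ▸ hh')

lemma sum_columnMatrix_univ [Fintype M] {f : M → J} (hf : Function.Injective f) (t : ℝ) {j : J}
    (hj : ∃ h, f h = j) : ∑ h, columnMatrix f t j h = t := by
  obtain ⟨h, rfl⟩ := hj
  simp [sum_columnMatrix_of_injective hf]

lemma IsColRep.columnMatrix_add_le [Fintype J] [Fintype M] {y : J → M → ℝ} {w : ℝ}
    {cols : Finset (M → J)} {mult : (M → J) → ℝ} (hrep : IsColRep y w cols mult)
    {f1 f2 : M → J} (hf1 : f1 ∈ cols) (hf2 : f2 ∈ cols) (hne : f1 ≠ f2) {t : ℝ}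
    (ht1 : t ≤ mult f1) (ht2 : t ≤ mult f2) (j : J) (h : M) :
    columnMatrix f1 t j h + columnMatrix f2 t j h ≤ y j h := by
  have hterm : ∀ f ∈ cols, 0 ≤ if f h = j then mult f else 0 := fun f hf => by
    split_ifs <;> simp [(hrep.1 f hf).2.le]
  calc columnMatrix f1 t j h + columnMatrix f2 t j h
      ≤ (if f1 h = j then mult f1 else 0) + (if f2 h = j then mult f2 else 0) := by
        unfold columnMatrix
        gcongr <;> split_ifs <;> simp [*]
    _ = ∑ f ∈ {f1, f2}, if f h = j then mult f else 0 := by rw [sum_pair hne]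
    _ ≤ ∑ f ∈ cols, if f h = j then mult f else 0 :=
        sum_le_sum_of_subset_of_nonneg (insert_subset hf1 (singleton_subset_iff.2 hf2))
          fun f hf _ => hterm f hf
    _ = y j h := (hrep.2.2 j h).symm

lemma sum_sub_columns_le [Fintype M] {y : J → M → ℝ} {w : ℝ} {f1 f2 : M → J}
    (hf1 : IsColumn y w f1) (hf2 : IsColumn y w f2) {t : ℝ} (ht : 0 ≤ t)
    (hslack : ∀ j, ∑ h, y j h ≠ w → 2 * t ≤ w - ∑ h, y j h) (j : J) :
    ∑ h, (y - columnMatrix f1 t - columnMatrix f2 t) j h ≤ w - 2 * t := by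
  simp only [Pi.sub_apply, sum_sub_distrib]
  by_cases htight : ∑ h, y j h = w
  · rw [sum_columnMatrix_univ hf1.1 t (hf1.2.2 j htight),
      sum_columnMatrix_univ hf2.1 t (hf2.2.2 j htight)]
    linarith
  · have h1 : 0 ≤ ∑ h, columnMatrix f1 t j h :=
      sum_nonneg fun h _ => columnMatrix_nonneg ht j h
    have h2 : 0 ≤ ∑ h, columnMatrix f2 t j h :=
      sum_nonneg fun h _ => columnMatrix_nonneg ht j h
    linarith [hslack j htight]

lemma sub_single_sub_single_le (x : J → ℝ) (p q : J) {t : ℝ} (ht : 0 ≤ t) (j : J) :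
    (x - Pi.single p t - Pi.single q t : J → ℝ) j ≤ x j := by
  simp only [Pi.sub_apply, Pi.single_apply]
  split_ifs <;> linarith

lemma sub_single_sub_single_nonneg {x : J → ℝ} (hx : ∀ j, 0 ≤ x j) {p q : J} (hpq : p ≠ q)
    {t : ℝ} (hp : t ≤ x p) (hq : t ≤ x q) (j : J) :
    0 ≤ (x - Pi.single p t - Pi.single q t : J → ℝ) j := by
  simp only [Pi.sub_apply, Pi.single_apply]
  split_ifs with h1 h2 h2
  · exact absurd (h1.symm.trans h2) hpq
  all_goals subst_vars; linarith [hx j]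

lemma sum_sub_single_sub_single [Fintype J] (x : J → ℝ) (p q : J) (t : ℝ) :
    ∑ j, (x - Pi.single p t - Pi.single q t : J → ℝ) j = ∑ j, x j - 2 * t := by
  simp only [Pi.sub_apply, sum_sub_distrib, sum_pi_single', mem_univ, if_true]
  ring

/-- `fB` sends `p` and `q` outside `S`, so at each job the two columns and the two point masses
raise the left-hand side by at most `2t`. -/
lemma group_constraint_sub_columns [Fintype J] {S T : Finset M} (hST : Disjoint S T)
    {fA fB : M → J} (hA : Function.Injective fA) (hB : Function.Injective fB)
    {p q : J} (hpq : p ≠ q)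
    (hp : ∃ h ∈ T, fB h = p) (hq : ∃ h ∈ T, fB h = q) {t : ℝ} (ht : 0 ≤ t)
    {b : J → M → ℕ} {a : J → ℕ} {y : J → M → ℝ} {x : J → ℝ} {r : ℝ} {j : J}
    (hc : ∑ h ∈ S, ((b j h : ℝ) - y j h) + a j - x j ≤ ∑ j', (a j' : ℝ) - r) :
    ∑ h ∈ S, ((b j h : ℝ) - (y - columnMatrix fA t - columnMatrix fB t) j h) + a j
      - (x - Pi.single p t - Pi.single q t : J → ℝ) j
      ≤ ∑ j', (a j' : ℝ) - (r - 2 * t) := by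
  have hsplit : ∑ h ∈ S, ((b j h : ℝ) - (y - columnMatrix fA t - columnMatrix fB t) j h) =
      ∑ h ∈ S, ((b j h : ℝ) - y j h) + ∑ h ∈ S, columnMatrix fA t j h
        + ∑ h ∈ S, columnMatrix fB t j h := by
    simp only [Pi.sub_apply, ← sum_add_distrib]
    exact sum_congr rfl fun _ _ => by ring
  have hAle := sum_columnMatrix_le hA ht S j
  have hBle : ∑ h ∈ S, columnMatrix fB t j h + (Pi.single p t : J → ℝ) j
      + (Pi.single q t : J → ℝ) j ≤ t := by
    by_cases hjp : j = p
    · subst hjp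
      rw [sum_columnMatrix_eq_zero hB t hST hp, Pi.single_eq_same, Pi.single_eq_of_ne hpq]
      simp
    by_cases hjq : j = q
    · subst hjq
      rw [sum_columnMatrix_eq_zero hB t hST hq, Pi.single_eq_of_ne hjp, Pi.single_eq_same]
      simp
    rw [Pi.single_eq_of_ne hjp, Pi.single_eq_of_ne hjq]
    linarith [sum_columnMatrix_le hB ht S j]
  rw [hsplit]
  simp only [Pi.sub_apply] at hBle ⊢
  linarith

end Columns

section Perturbation

variable {J M : Type*} [Fintype J] [Fintype M] [DecidableEq J]

theorem FeasibleS.sub_columns {G1 G2 : Finset M} {b : J → M → ℕ} {a1 a2 : J → ℕ}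
    {y : J → M → ℝ} {x1 x2 : J → ℝ} {r w : ℝ} (hS : FeasibleS G1 G2 b a1 a2 y x1 x2 r w)
    (hdisj : Disjoint G1 G2) {cols : Finset (M → J)} {mult : (M → J) → ℝ}
    (hrep : IsColRep y w cols mult) {f1 f2 : M → J} (hf1 : f1 ∈ cols) (hf2 : f2 ∈ cols)
    (hne : f1 ≠ f2) {g ja k jb : J} (hgja : g ≠ ja) (hkjb : k ≠ jb)
    (hg : ∃ h ∈ G1, f1 h = g) (hja : ∃ h ∈ G1, f1 h = ja)
    (hk : ∃ h ∈ G2, f2 h = k) (hjb : ∃ h ∈ G2, f2 h = jb)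
    {t : ℝ} (ht : 0 ≤ t) (hm1 : t ≤ mult f1) (hm2 : t ≤ mult f2)
    (hxg : t ≤ x1 g) (hxa : t ≤ x1 ja) (hxk : t ≤ x2 k) (hxb : t ≤ x2 jb)
    (hx : ∀ j, x1 j + x2 j ≤ r - 2 * t)
    (hslack : ∀ j, ∑ h, y j h ≠ w → 2 * t ≤ w - ∑ h, y j h) :
    FeasibleS G1 G2 b a1 a2 (y - columnMatrix f1 t - columnMatrix f2 t)
      (x1 - Pi.single g t - Pi.single ja t) (x2 - Pi.single k t - Pi.single jb t)
      (r - 2 * t) (w - 2 * t) := by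
  obtain ⟨hG1, hG2, -, hy, hx1, hx2, -, hx1b, hx2b, hc1, hc2⟩ := hS
  have hinj1 := (hrep.1 f1 hf1).1.1
  have hinj2 := (hrep.1 f2 hf2).1.1
  have hmachine : ∀ h, ∑ j, (y - columnMatrix f1 t - columnMatrix f2 t) j h
      = ∑ j, y j h - 2 * t := fun h => by
    simp only [Pi.sub_apply, sum_sub_distrib, sum_columnMatrix_jobs]
    ring
  refine ⟨fun h hh => ?_, fun h hh => ?_,
    sum_sub_columns_le (hrep.1 f1 hf1).1 (hrep.1 f2 hf2).1 ht hslack, fun j h => ⟨?_, ?_⟩,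
    by rw [sum_sub_single_sub_single, hx1], by rw [sum_sub_single_sub_single, hx2],
    fun j => ?_, fun j => ⟨?_, ?_⟩, fun j => ⟨?_, ?_⟩,
    fun j => group_constraint_sub_columns hdisj hinj1 hinj2 hkjb hk hjb ht (hc1 j),
    fun j => ?_⟩
  · rw [hmachine]
    constructor <;> linarith [hG1 h hh]
  · rw [hmachine]
    constructor <;> linarith [hG2 h hh]
  · simp only [Pi.sub_apply]
    linarith [hrep.columnMatrix_add_le hf1 hf2 hne hm1 hm2 j h]
  · simp only [Pi.sub_apply]
    linarith [(hy j h).2, columnMatrix_nonneg (f := f1) ht j h,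
      columnMatrix_nonneg (f := f2) ht j h]
  · linarith [hx j, sub_single_sub_single_le x1 g ja ht j,
      sub_single_sub_single_le x2 k jb ht j]
  · exact sub_single_sub_single_nonneg (fun j => (hx1b j).1) hgja hxg hxa j
  · linarith [(hx1b j).2, sub_single_sub_single_le x1 g ja ht j]
  · exact sub_single_sub_single_nonneg (fun j => (hx2b j).1) hkjb hxk hxb j
  · linarith [(hx2b j).2, sub_single_sub_single_le x2 k jb ht j]
  · rw [sub_right_comm y]
    exact group_constraint_sub_columns hdisj.symm hinj2 hinj1 hgja hg hja ht (hc2 j)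

theorem FeasibleS.eventually_sub_columns {G1 G2 : Finset M} {b : J → M → ℕ}
    {a1 a2 : J → ℕ} {y : J → M → ℝ} {x1 x2 : J → ℝ} {r w : ℝ}
    (hS : FeasibleS G1 G2 b a1 a2 y x1 x2 r w)
    (hdisj : Disjoint G1 G2) {cols : Finset (M → J)} {mult : (M → J) → ℝ}
    (hrep : IsColRep y w cols mult) {f1 f2 : M → J} (hf1 : f1 ∈ cols) (hf2 : f2 ∈ cols)
    (hne : f1 ≠ f2) {g ja k jb : J} (hgja : g ≠ ja) (hkjb : k ≠ jb)
    (hg : ∃ h ∈ G1, f1 h = g) (hja : ∃ h ∈ G1, f1 h = ja)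
    (hk : ∃ h ∈ G2, f2 h = k) (hjb : ∃ h ∈ G2, f2 h = jb)
    (hxg : 0 < x1 g) (hxa : 0 < x1 ja) (hxk : 0 < x2 k) (hxb : 0 < x2 jb)
    (hx : ∀ j, x1 j + x2 j < r) :
    ∀ᶠ t in 𝓝[>] (0 : ℝ),
      FeasibleS G1 G2 b a1 a2 (y - columnMatrix f1 t - columnMatrix f2 t)
      (x1 - Pi.single g t - Pi.single ja t) (x2 - Pi.single k t - Pi.single jb t)
      (r - 2 * t) (w - 2 * t) := by
  have hload : ∀ j, ∑ h, y j h ≤ w := hS.2.2.1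
  have small : ∀ c : ℝ, 0 < c → ∀ᶠ t in 𝓝[>] (0 : ℝ), 2 * t ≤ c := fun c hc =>
    nhdsWithin_le_nhds <| (eventually_le_nhds (half_pos hc)).mono fun t ht => by linarith
  have hslack :
      ∀ᶠ t in 𝓝[>] (0 : ℝ), ∀ j, ∑ h, y j h ≠ w → 2 * t ≤ w - ∑ h, y j h :=
    eventually_all.2 fun j => by
      by_cases htight : ∑ h, y j h = w
      · exact .of_forall fun _ hnt => absurd htight hnt
      · exact (small _ (sub_pos.2 ((hload j).lt_of_ne htight))).mono fun _ h _ => h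
  filter_upwards [self_mem_nhdsWithin, small _ (hrep.1 f1 hf1).2, small _ (hrep.1 f2 hf2).2,
    small _ hxg, small _ hxa, small _ hxk, small _ hxb,
    eventually_all.2 fun j => small _ (sub_pos.2 (hx j)), hslack]
    with t (ht : 0 < t) hm1 hm2 htg hta htk htb htx hts
  exact hS.sub_columns hdisj hrep hf1 hf2 hne hgja hkjb hg hja hk hjb ht.le (by linarith)
    (by linarith) (by linarith) (by linarith) (by linarith) (by linarith)
    (fun j => by linarith [htx j]) hts

end Perturbation

section EpsR

variable {J : Type*} [DecidableEq J] (B1 B2 : Finset J) (x1 x2 : J → ℝ) (r ε : ℝ)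

lemma epsR_le_eps (p q : J) : epsR B1 B2 x1 x2 r ε p q ≤ ε := by
  unfold epsR
  split_ifs
  exacts [min_le_right _ _, le_rfl]

lemma epsR_le_of_mem {p q j : J} (hj : j ∈ B1 ∪ B2) (hjp : j ≠ p) (hjq : j ≠ q) :
    epsR B1 B2 x1 x2 r ε p q ≤ r - (x1 j + x2 j) := by
  have hmem : j ∈ (B1 ∪ B2) \ {p, q} := by simp [hj, hjp, hjq]
  rw [epsR, dif_pos ⟨j, hmem⟩]
  exact (min_le_left _ _).trans (inf'_le _ hmem)

variable {B1 B2 x1 x2 r ε}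

lemma add_le_sub_epsR (hB1 : ∀ j, j ∈ B1 ↔ ¬∃ z : ℤ, x1 j = z)
    (hB2 : ∀ j, j ∈ B2 ↔ ¬∃ z : ℤ, x2 j = z) {n : ℤ} (hr : r = n + ε) (hε : ε < 1)
    {p q j : J} (hjp : j ≠ p) (hjq : j ≠ q) (hj : x1 j + x2 j ≤ r) :
    x1 j + x2 j ≤ r - epsR B1 B2 x1 x2 r ε p q := by
  by_cases hjB : j ∈ B1 ∪ B2
  · linarith [epsR_le_of_mem B1 B2 x1 x2 r ε hjB hjp hjq]
  simp only [mem_union, hB1, hB2, not_or, not_not] at hjB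
  obtain ⟨⟨z1, hz1⟩, ⟨z2, hz2⟩⟩ := hjB
  have hz : z1 + z2 ≤ n := by
    have : ((z1 + z2 : ℤ) : ℝ) < n + 1 := by push_cast; linarith
    exact Int.lt_add_one_iff.1 (by exact_mod_cast this)
  have : x1 j + x2 j ≤ n := by rw [hz1, hz2]; exact_mod_cast hz
  linarith [epsR_le_eps B1 B2 x1 x2 r ε p q]

end EpsR

theorem no_pair_of_full_columns_general
    {J M : Type*} [Fintype J] [Fintype M] [DecidableEq J]
    (G1 G2 : Finset M)
    (hdisj : Disjoint G1 G2)
    (b : J → M → ℕ) (a1 a2 : J → ℕ)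
    (rstar wstar : ℝ)
    (y : J → M → ℝ) (x1 x2 : J → ℝ) (r w : ℝ)
    (hfeas : FeasibleLP G1 G2 b a1 a2 rstar wstar y x1 x2 r w)
    (hopt : ∀ y' x1' x2' r' w',
      FeasibleLP G1 G2 b a1 a2 rstar wstar y' x1' x2' r' w' → r ≤ r')
    (ε : ℝ) (hε0 : 0 < ε) (hε1 : ε < 1) (hrε : r = (⌊rstar⌋ : ℝ) + ε)
    (B1 B2 : Finset J)
    (hB1 : ∀ j, j ∈ B1 ↔ ¬∃ z : ℤ, x1 j = (z : ℝ))
    (hB2 : ∀ j, j ∈ B2 ↔ ¬∃ z : ℤ, x2 j = (z : ℝ))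
    (cols : Finset (M → J)) (mult : (M → J) → ℝ)
    (hrep : IsColRep y w cols mult)
    (g k ja jb : J)
    (hgja : g ≠ ja) (hgjb : g ≠ jb)
    (hkja : k ≠ ja) (hkjb : k ≠ jb)
    (hxg : 0 < x1 g) (hxk : 0 < x2 k) (hxa : 0 < x1 ja) (hxb : 0 < x2 jb)
    (he1 : 0 < epsR B1 B2 x1 x2 r ε g k)
    (he2 : 0 < epsR B1 B2 x1 x2 r ε ja jb) :
    (¬ ∃ f ∈ cols, (∃ h ∈ G1, f h = ja) ∧ (∃ h ∈ G1, f h = jb) ∧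
        (∃ h ∈ G1, f h = g) ∧ (∃ h ∈ G1, f h = k)) ∨
    (¬ ∃ f ∈ cols, (∃ h ∈ G2, f h = ja) ∧ (∃ h ∈ G2, f h = jb) ∧
        (∃ h ∈ G2, f h = k) ∧ (∃ h ∈ G2, f h = g)) := by
  by_contra! hboth
  obtain ⟨⟨f1, hf1, hja1, -, hg1, -⟩, ⟨f2, hf2, -, hjb2, hk2, hg2⟩⟩ := hboth
  obtain ⟨hS, hwr, hfloor⟩ := hfeas
  have hne : f1 ≠ f2 := by
    rintro rfl
    obtain ⟨h1, hh1, rfl⟩ := hg1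
    obtain ⟨h2, hh2, he⟩ := hg2
    exact disjoint_left.1 hdisj hh1 ((hrep.1 f1 hf1).1.1 he ▸ hh2)
  have hx : ∀ j, x1 j + x2 j < r := fun j => by
    have hj : x1 j + x2 j ≤ r := hS.2.2.2.2.2.2.1 j
    by_cases hgk : j = g ∨ j = k
    · have hja : j ≠ ja := by rcases hgk with rfl | rfl <;> assumption
      have hjb : j ≠ jb := by rcases hgk with rfl | rfl <;> assumption
      linarith [add_le_sub_epsR hB1 hB2 hrε hε1 hja hjb hj]
    · obtain ⟨hjg, hjk⟩ := not_or.1 hgk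
      linarith [add_le_sub_epsR hB1 hB2 hrε hε1 hjg hjk hj]
  obtain ⟨t, hSt, ht0, htε⟩ := ((hS.eventually_sub_columns hdisj hrep hf1 hf2 hne hgja hkjb
    hg1 hja1 hk2 hjb2 hxg hxa hxk hxb hx).and (eventually_mem_nhdsWithin.and
    (nhdsWithin_le_nhds (eventually_le_nhds (half_pos hε0))))).exists
  have := hopt _ _ _ _ _ ⟨hSt, by rw [← hwr]; ring, by linarith⟩
  linarith [Set.mem_Ioi.1 ht0]

theorem no_pair_of_full_columns
    {J M : Type*} [Fintype J] [Fintype M] [DecidableEq J] [DecidableEq M]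
    (G1 G2 : Finset M) (hG1ne : G1.Nonempty) (hG2ne : G2.Nonempty)
    (hdisj : Disjoint G1 G2) (hcover : G1 ∪ G2 = Finset.univ)
    (b : J → M → ℕ) (a1 a2 : J → ℕ)
    (ystar : J → M → ℝ) (x1star x2star : J → ℝ) (rstar wstar : ℝ)
    (hstar : FeasibleS G1 G2 b a1 a2 ystar x1star x2star rstar wstar)
    (hstaropt : ∀ y' x1' x2' r' w', FeasibleS G1 G2 b a1 a2 y' x1' x2' r' w' →
      wstar - rstar ≤ w' - r')
    (y : J → M → ℝ) (x1 x2 : J → ℝ) (r w : ℝ)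
    (hfeas : FeasibleLP G1 G2 b a1 a2 rstar wstar y x1 x2 r w)
    (hopt : ∀ y' x1' x2' r' w',
      FeasibleLP G1 G2 b a1 a2 rstar wstar y' x1' x2' r' w' → r ≤ r')
    (ε : ℝ) (hε0 : 0 < ε) (hε1 : ε < 1) (hrε : r = (⌊rstar⌋ : ℝ) + ε)
    (B1 B2 : Finset J)
    (hB1 : ∀ j, j ∈ B1 ↔ ¬∃ z : ℤ, x1 j = (z : ℝ))
    (hB2 : ∀ j, j ∈ B2 ↔ ¬∃ z : ℤ, x2 j = (z : ℝ))
    (cols : Finset (M → J)) (mult : (M → J) → ℝ)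
    (hrep : IsColRep y w cols mult)
    (g k ja jb : J)
    (hgk : g ≠ k) (hgja : g ≠ ja) (hgjb : g ≠ jb)
    (hkja : k ≠ ja) (hkjb : k ≠ jb) (hjajb : ja ≠ jb)
    (hxg : 0 < x1 g) (hxk : 0 < x2 k) (hxa : 0 < x1 ja) (hxb : 0 < x2 jb)
    (he1 : 0 < epsR B1 B2 x1 x2 r ε g k)
    (he2 : 0 < epsR B1 B2 x1 x2 r ε ja jb) :
    (¬ ∃ f ∈ cols, (∃ h ∈ G1, f h = ja) ∧ (∃ h ∈ G1, f h = jb) ∧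
        (∃ h ∈ G1, f h = g) ∧ (∃ h ∈ G1, f h = k)) ∨
    (¬ ∃ f ∈ cols, (∃ h ∈ G2, f h = ja) ∧ (∃ h ∈ G2, f h = jb) ∧
        (∃ h ∈ G2, f h = k) ∧ (∃ h ∈ G2, f h = g)) :=
  no_pair_of_full_columns_general G1 G2 hdisj b a1 a2 rstar wstar y x1 x2 r w hfeas hopt ε hε0 hε1
    hrε B1 B2 hB1 hB2 cols mult hrep g k ja jb hgja hgjb hkja hkjb hxg hxk hxa hxb he1 he2
end
end
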